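/- Let S, A be nonempty finite sets, r : S × A → ℝ, and let 𝒰 be a nonempty finite set of transition kernels P : S × A → Δ(S). Then the robust Blackwell discount factor exists: there is γ̄ ∈ [0,1) such that for every γ ∈ (γ̄, 1) and every policy π, π is robust γ-discounted optimal if and only if π is robust Blackwell-optimal. -/

import Mathlib

/-!
Each entry of `(1 - γ P_π)⁻¹ r_π` is a rational function of `γ` whose denominator
`det (1 - γ P_π)` is a nonzero polynomial (it is `1` at `γ = 0`). Hence every comparison between
two value functions is decided, for `γ` close to `1`, by the sign of a fixed polynomial, which is
eventually constant on the left of `1`. Robust optimality of `π` is a finite Boolean combination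
(`∀ π' s Q, ∃ P`) of such comparisons, so it too is eventually constant as `γ → 1⁻`; past a
threshold where all finitely many policies have settled, `γ`-optimality agrees with
Blackwell optimality.
-/

open Matrix

/-- The transition matrix induced by a policy `π`. -/
def policyMatrix {S A : Type*} [Fintype S] (P : S → A → S → ℝ) (π : S → A) :
    Matrix S S ℝ :=
  Matrix.of fun s s' => P s (π s) s'

/-- The reward vector induced by a policy `π`. -/
def policyReward {S A : Type*} (r : S → A → ℝ) (π : S → A) : S → ℝ :=
  fun s => r s (π s)

/-- The discounted value function of a policy `π` under kernel `P`:
`v^{π,P}_γ = (I - γ P_π)⁻¹ r_π`. -/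
noncomputable def valueFn {S A : Type*} [Fintype S] [DecidableEq S]
    (r : S → A → ℝ) (P : S → A → S → ℝ) (π : S → A) (γ : ℝ) : S → ℝ :=
  ((1 : Matrix S S ℝ) - γ • policyMatrix P π)⁻¹ *ᵥ policyReward r π

/-- The worst-case (robust) value function over a nonempty finite set `U` of kernels:
`v^{π,U}_{γ,s} = min_{P ∈ U} v^{π,P}_{γ,s}`. -/
noncomputable def robustValueFn {S A : Type*} [Fintype S] [DecidableEq S]
    (r : S → A → ℝ) (U : Finset (S → A → S → ℝ)) (hU : U.Nonempty)
    (π : S → A) (γ : ℝ) (s : S) : ℝ :=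
  U.inf' hU fun P => valueFn r P π γ s

/-- `π` is robust `γ`-discounted optimal. -/
def RobustDiscountedOptimal {S A : Type*} [Fintype S] [DecidableEq S]
    (r : S → A → ℝ) (U : Finset (S → A → S → ℝ)) (hU : U.Nonempty)
    (γ : ℝ) (π : S → A) : Prop :=
  ∀ (π' : S → A) (s : S), robustValueFn r U hU π' γ s ≤ robustValueFn r U hU π γ s

/-- `π` is robust Blackwell-optimal: robust `γ'`-discounted optimal for all `γ'` in some
`[γ₀, 1)`. -/
def RobustBlackwellOptimal {S A : Type*} [Fintype S] [DecidableEq S]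
    (r : S → A → ℝ) (U : Finset (S → A → S → ℝ)) (hU : U.Nonempty)
    (π : S → A) : Prop :=
  ∃ γ₀ : ℝ, 0 ≤ γ₀ ∧ γ₀ < 1 ∧
    ∀ γ' : ℝ, γ₀ ≤ γ' → γ' < 1 → RobustDiscountedOptimal r U hU γ' π

open Filter Topology Polynomial Set

namespace Filter

variable {α ι : Type*} {l : Filter α}

theorem EventuallyConst.pi [Finite ι] {β : Type*} [Nonempty β] {f : α → ι → β}
    (h : ∀ i, EventuallyConst (f · i) l) : EventuallyConst f l := by
  choose c hc using fun i => (h i).eventuallyEq_const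
  exact eventuallyConst_iff_exists_eventuallyEq.2
    ⟨c, (eventually_all.2 hc).mono fun _ hx => funext hx⟩

theorem EventuallyConst.forall [Finite ι] {p : ι → α → Prop}
    (h : ∀ i, EventuallyConst (p i) l) : EventuallyConst (fun x => ∀ i, p i x) l :=
  (EventuallyConst.pi h).comp fun q => ∀ i, q i

theorem EventuallyConst.exists [Finite ι] {p : ι → α → Prop}
    (h : ∀ i, EventuallyConst (p i) l) : EventuallyConst (fun x => ∃ i, p i x) l :=
  (EventuallyConst.pi h).comp fun q => ∃ i, q i

end Filter

theorem Polynomial.eventually_not_isRoot_nhdsNE {R : Type*} [CommRing R] [IsDomain R]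
    [TopologicalSpace R] [T1Space R] {p : R[X]} (hp : p ≠ 0) (a : R) :
    ∀ᶠ x in 𝓝[≠] a, ¬p.IsRoot x :=
  nhdsNE_le_cofinite a (finite_setOfPred_isRoot hp).compl_mem_cofinite

section SignNearEndpoint

variable {α β : Type*} [ConditionallyCompleteLinearOrder α] [TopologicalSpace α] [OrderTopology α]
  [DenselyOrdered α] [NoMinOrder α] [LinearOrder β] [TopologicalSpace β] [OrderClosedTopology β]
  [Zero β]

theorem eventuallyConst_nonneg_nhdsLT_of_eventually_ne {f : α → β} (hf : Continuous f) {a : α}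
    (h : ∀ᶠ x in 𝓝[<] a, f x ≠ 0) : EventuallyConst (fun x => 0 ≤ f x) (𝓝[<] a) := by
  obtain ⟨b, hba, hb⟩ := (nhdsLT_basis a).eventually_iff.1 h
  have key : ∀ x ∈ Ioo b a, ∀ y ∈ Ioo b a, 0 ≤ f x → 0 ≤ f y := by
    intro x hx y hy hfx
    by_contra! hfy
    obtain ⟨z, hz, hfz⟩ :=
      isPreconnected_Ioo.intermediate_value hy hx hf.continuousOn ⟨hfy.le, hfx⟩
    exact hb hz hfz
  exact (nhdsLT_basis a).eventuallyConst_iff.2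
    ⟨b, hba, fun x hx y hy => propext ⟨key x hx y hy, key y hy x hx⟩⟩

end SignNearEndpoint

namespace Polynomial

theorem eventuallyConst_nonneg_eval_nhdsLT (p : ℝ[X]) (a : ℝ) :
    EventuallyConst (fun x => 0 ≤ p.eval x) (𝓝[<] a) := by
  rcases eq_or_ne p 0 with rfl | hp
  · simp
  exact eventuallyConst_nonneg_nhdsLT_of_eventually_ne p.continuous
    ((p.eventually_not_isRoot_nhdsNE hp a).filter_mono (nhdsLT_le_nhdsNE a))

theorem eventuallyConst_eval_div_le_eval_div {n₁ d₁ n₂ d₂ : ℝ[X]} (hd₁ : d₁ ≠ 0) (hd₂ : d₂ ≠ 0)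
    (a : ℝ) :
    EventuallyConst (fun x => n₁.eval x / d₁.eval x ≤ n₂.eval x / d₂.eval x) (𝓝[<] a) := by
  -- Clearing denominators with `(d₁ d₂)² > 0` avoids knowing the signs of `d₁` and `d₂`.
  refine (eventuallyConst_nonneg_eval_nhdsLT ((n₂ * d₁ - n₁ * d₂) * d₁ * d₂) a).congr ?_
  filter_upwards [(d₁.eventually_not_isRoot_nhdsNE hd₁ a).filter_mono (nhdsLT_le_nhdsNE a),
    (d₂.eventually_not_isRoot_nhdsNE hd₂ a).filter_mono (nhdsLT_le_nhdsNE a)] with x h₁ h₂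
  replace h₁ : d₁.eval x ≠ 0 := h₁
  replace h₂ : d₂.eval x ≠ 0 := h₂
  have hsq : 0 < (d₁.eval x * d₂.eval x) ^ 2 := by positivity
  have hsub : n₂.eval x / d₂.eval x - n₁.eval x / d₁.eval x
      = ((n₂ * d₁ - n₁ * d₂) * d₁ * d₂).eval x / (d₁.eval x * d₂.eval x) ^ 2 := by
    simp only [eval_mul, eval_sub]
    field_simp
  rw [eq_iff_iff, ← sub_nonneg (a := n₂.eval x / d₂.eval x), hsub, le_div_iff₀ hsq, zero_mul]

end Polynomial

namespace Matrix

variable {n K : Type*} [Fintype n] [DecidableEq n] [Field K]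

noncomputable def resolventNumerator (M : Matrix n n K) (w : n → K) : n → K[X] :=
  (1 - (X : K[X]) • M.map C).adjugate *ᵥ fun j => C (w j)

theorem charpolyRev_ne_zero (M : Matrix n n K) : M.charpolyRev ≠ 0 := fun h => by
  simpa [h] using M.eval_charpolyRev

theorem mapMatrix_evalRingHom_one_sub_X_smul (M : Matrix n n K) (γ : K) :
    (evalRingHom γ).mapMatrix (1 - (X : K[X]) • M.map C) = 1 - γ • M := by
  ext i j
  rcases eq_or_ne i j with rfl | hij <;> simp [mul_comm (M _ _), *]

/-- No invertibility is needed: where the determinant vanishes, both sides are the junk value `0`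
(`Ring.inverse 0 = 0` and `x / 0 = 0`). -/
theorem inv_one_sub_smul_mulVec_apply (M : Matrix n n K) (w : n → K) (γ : K) (i : n) :
    ((1 - γ • M)⁻¹ *ᵥ w) i = (M.resolventNumerator w i).eval γ / M.charpolyRev.eval γ := by
  have hdet : M.charpolyRev.eval γ = (1 - γ • M).det := by
    rw [charpolyRev, ← coe_evalRingHom, RingHom.map_det, mapMatrix_evalRingHom_one_sub_X_smul]
  have hadj : ∀ j,
      ((1 - (X : K[X]) • M.map C).adjugate i j).eval γ = (1 - γ • M).adjugate i j := by
    intro j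
    rw [← mapMatrix_evalRingHom_one_sub_X_smul, ← RingHom.map_adjugate]
    rfl
  simp [resolventNumerator, inv_def, hdet, mulVec, dotProduct, eval_finsetSum, hadj,
    div_eq_inv_mul, Finset.mul_sum, mul_assoc]

end Matrix

section RobustMDP

variable {S A : Type*} [Fintype S] [DecidableEq S]

theorem valueFn_eq_div (r : S → A → ℝ) (P : S → A → S → ℝ) (π : S → A) (γ : ℝ) (s : S) :
    valueFn r P π γ s = ((policyMatrix P π).resolventNumerator (policyReward r π) s).eval γ
      / (policyMatrix P π).charpolyRev.eval γ :=
  Matrix.inv_one_sub_smul_mulVec_apply _ _ _ _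

theorem eventuallyConst_valueFn_le (r : S → A → ℝ) (P Q : S → A → S → ℝ) (π π' : S → A) (s : S)
    (a : ℝ) :
    EventuallyConst (fun γ => valueFn r P π γ s ≤ valueFn r Q π' γ s) (𝓝[<] a) := by
  simp only [valueFn_eq_div]
  exact eventuallyConst_eval_div_le_eval_div (Matrix.charpolyRev_ne_zero _)
    (Matrix.charpolyRev_ne_zero _) a

theorem eventuallyConst_robustValueFn_le (r : S → A → ℝ) (U : Finset (S → A → S → ℝ))
    (hU : U.Nonempty) (π π' : S → A) (s : S) (a : ℝ) :
    EventuallyConst (fun γ => robustValueFn r U hU π' γ s ≤ robustValueFn r U hU π γ s)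
      (𝓝[<] a) := by
  have hcomp : (fun γ => robustValueFn r U hU π' γ s ≤ robustValueFn r U hU π γ s) =
      fun γ => ∀ Q : U, ∃ P : U, valueFn r P π' γ s ≤ valueFn r Q π γ s := by
    ext γ
    simp [robustValueFn, Finset.le_inf'_iff, Finset.inf'_le_iff]
  rw [hcomp]
  exact .forall fun Q => .exists fun P => eventuallyConst_valueFn_le r P Q π' π s a

theorem eventuallyConst_robustDiscountedOptimal [Fintype A] (r : S → A → ℝ)
    (U : Finset (S → A → S → ℝ)) (hU : U.Nonempty) (π : S → A) (a : ℝ) :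
    EventuallyConst (fun γ => RobustDiscountedOptimal r U hU γ π) (𝓝[<] a) :=
  .forall fun π' => .forall fun s => eventuallyConst_robustValueFn_le r U hU π π' s a

end RobustMDP

theorem exists_forall_iff_forall_near_one_of_eventuallyConst {ι : Type*} [Finite ι]
    {p : ι → ℝ → Prop} (hp : ∀ i, EventuallyConst (p i) (𝓝[<] 1)) :
    ∃ b : ℝ, 0 ≤ b ∧ b < 1 ∧ ∀ γ : ℝ, b < γ → γ < 1 → ∀ i,
      p i γ ↔ ∃ γ₀ : ℝ, 0 ≤ γ₀ ∧ γ₀ < 1 ∧ ∀ γ' : ℝ, γ₀ ≤ γ' → γ' < 1 → p i γ' := by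
  obtain ⟨b, hb1, hb⟩ := (nhdsLT_basis (1 : ℝ)).eventuallyConst_iff.1
    (EventuallyConst.pi (f := fun γ i => p i γ) hp)
  have hconst : ∀ γ ∈ Ioo b 1, ∀ γ' ∈ Ioo b 1, ∀ i, p i γ ↔ p i γ' := fun γ hγ γ' hγ' i =>
    iff_of_eq (congrFun (hb γ hγ γ' hγ') i)
  refine ⟨max b 0, le_max_right _ _, max_lt hb1 one_pos, fun γ hbγ hγ1 i => ⟨fun hpγ => ?_, ?_⟩⟩
  · have hγ : γ ∈ Ioo b 1 := ⟨(le_max_left _ _).trans_lt hbγ, hγ1⟩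
    exact ⟨γ, (le_max_right _ _).trans hbγ.le, hγ1, fun γ' hγγ' hγ'1 =>
      (hconst γ hγ γ' ⟨hγ.1.trans_le hγγ', hγ'1⟩ i).1 hpγ⟩
  · rintro ⟨γ₀, -, hγ₀1, hγ₀⟩
    have hγ' : max γ₀ γ ∈ Ioo b 1 :=
      ⟨(le_max_left _ _).trans_lt (hbγ.trans_le (le_max_right _ _)), max_lt hγ₀1 hγ1⟩
    exact (hconst _ hγ' γ ⟨(le_max_left _ _).trans_lt hbγ, hγ1⟩ i).1
      (hγ₀ _ (le_max_left _ _) hγ'.2)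

theorem exists_robust_blackwell_discount_factor_general {S A : Type*} [Fintype S] [DecidableEq S]
    [Fintype A]
    (r : S → A → ℝ) (U : Finset (S → A → S → ℝ)) (hU : U.Nonempty) :
    ∃ γbar : ℝ, 0 ≤ γbar ∧ γbar < 1 ∧
      ∀ γ : ℝ, γbar < γ → γ < 1 →
        ∀ π : S → A,
          RobustDiscountedOptimal r U hU γ π ↔ RobustBlackwellOptimal r U hU π :=
  exists_forall_iff_forall_near_one_of_eventuallyConst fun π =>
    eventuallyConst_robustDiscountedOptimal r U hU π 1

/-- The robust Blackwell discount factor exists: there is `γ̄ ∈ [0,1)` such that for every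
`γ ∈ (γ̄, 1)`, a policy is robust `γ`-discounted optimal iff it is robust
Blackwell-optimal. -/
theorem exists_robust_blackwell_discount_factor {S A : Type*} [Fintype S] [DecidableEq S]
    [Nonempty S] [Fintype A] [Nonempty A]
    (r : S → A → ℝ) (U : Finset (S → A → S → ℝ)) (hU : U.Nonempty)
    (hkernel : ∀ P ∈ U, ∀ (s : S) (a : A), (∀ s', 0 ≤ P s a s') ∧ ∑ s', P s a s' = 1) :
    ∃ γbar : ℝ, 0 ≤ γbar ∧ γbar < 1 ∧
      ∀ γ : ℝ, γbar < γ → γ < 1 →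
        ∀ π : S → A,
          RobustDiscountedOptimal r U hU γ π ↔ RobustBlackwellOptimal r U hU π :=
  exists_robust_blackwell_discount_factor_general r U hU
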